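/- arXiv:1605.04119 — 2 statements merged into one kernel-verified Lean document; each statement's English description precedes it below -/
import Mathlib

section
/- Let (M,d) be a metric space and x ∈ M. For every compact set K ⊆ M there exists R₀ > 0 such that for every admissible sequence u : ℕ → M and every R with 0 < R ≤ R₀ one has E_x(u, R) ∩ K = ∅. -/
open Filter Set

noncomputable section

/-- The horosphere of a sequence `u` with respect to base point `x` and radius `R`
in a metric space. -/
def horoE {M : Type*} [MetricSpace M] (x : M) (u : ℕ → M) (R : ℝ) : Set M :=
  {w : M | Filter.limsup (fun n => dist w (u n) - dist x (u n)) Filter.atTop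
      < (1 / 2) * Real.log R}

/-- A sequence `u` is admissible with respect to the base point `x` if
`dist x (u n) → ∞` and every horosphere of `u` is nonempty. -/
def IsAdmissible {M : Type*} [MetricSpace M] (x : M) (u : ℕ → M) : Prop :=
  Filter.Tendsto (fun n => dist x (u n)) Filter.atTop Filter.atTop ∧
  ∀ R > (0 : ℝ), (horoE x u R).Nonempty

theorem horoE_disjoint_compact {M : Type*} [MetricSpace M] (x : M)
    (K : Set M) (hK : IsCompact K) :
    ∃ R₀ > (0 : ℝ), ∀ (u : ℕ → M), IsAdmissible x u →
      ∀ R : ℝ, 0 < R → R ≤ R₀ → horoE x u R ∩ K = ∅ := by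
  obtain ⟨r, hr⟩ := hK.isBounded.subset_closedBall x
  set C : ℝ := max r 0 with hC
  have hC0 : 0 ≤ C := le_max_right _ _
  refine ⟨Real.exp (2 * (-(C + 1))), Real.exp_pos _, ?_⟩
  intro u _ R hR hRle
  ext w
  simp only [mem_inter_iff, mem_empty_iff_false, iff_false]
  rintro ⟨hw, hwK⟩
  have hwx : dist w x ≤ C := le_trans (hr hwK) (le_max_left _ _)
  have hlogR : (1 / 2) * Real.log R ≤ -(C + 1) := by
    have := Real.log_le_log hR hRle
    rw [Real.log_exp] at this
    linarith
  have hw' : Filter.limsup (fun n => dist w (u n) - dist x (u n)) Filter.atTop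
      < -(C + 1) := lt_of_lt_of_le hw hlogR
  have hub : ∀ n, dist w (u n) - dist x (u n) ≤ C := fun n => by
    have := abs_dist_sub_le w x (u n)
    have h2 := abs_le.mp this
    linarith [h2.2]
  have hlb : ∀ n, -C ≤ dist w (u n) - dist x (u n) := fun n => by
    have := abs_dist_sub_le w x (u n)
    have h2 := abs_le.mp this
    linarith [h2.1]
  have hbdd : IsBoundedUnder (· ≤ ·) atTop (fun n => dist w (u n) - dist x (u n)) :=
    ⟨C, Filter.eventually_atTop.mpr ⟨0, fun n _ => hub n⟩⟩
  have hle : -C ≤ Filter.limsup (fun n => dist w (u n) - dist x (u n)) Filter.atTop :=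
    Filter.le_limsup_of_frequently_le
      (Filter.Frequently.of_forall (fun n => hlb n)) hbdd
  linarith
end
end

section
/- Let (M,d) be a separable metric space, x ∈ M, and let u : ℕ → M be an admissible sequence. Then there exists a strictly increasing map σ : ℕ → ℕ such that u ∘ σ is both a Busemann sequence and an admissible sequence, and moreover E_x(u, R) ⊆ E_x(u ∘ σ, R) for every R > 0. -/
open Filter Set

noncomputable section

/-- A sequence `u` is a Busemann sequence with respect to the base point `x` if
`dist x (u n) → ∞` and for every `z` the limit of `dist z (u n) - dist x (u n)` exists. -/
def IsBusemann {M : Type*} [MetricSpace M] (x : M) (u : ℕ → M) : Prop :=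
  Filter.Tendsto (fun n => dist x (u n)) Filter.atTop Filter.atTop ∧
  ∀ z : M, ∃ L : ℝ,
    Filter.Tendsto (fun n => dist z (u n) - dist x (u n)) Filter.atTop (nhds L)

theorem exists_busemann_admissible_subsequence {M : Type*} [MetricSpace M]
    [TopologicalSpace.SeparableSpace M] (x : M) (u : ℕ → M)
    (hu : IsAdmissible x u) :
    ∃ σ : ℕ → ℕ, StrictMono σ ∧ IsBusemann x (u ∘ σ) ∧ IsAdmissible x (u ∘ σ) ∧
      ∀ R > (0 : ℝ), horoE x u R ⊆ horoE x (u ∘ σ) R := by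
  obtain ⟨h1, h2⟩ := hu
  have : Nonempty M := ⟨x⟩
  obtain ⟨D, hD⟩ := TopologicalSpace.exists_dense_seq M
  set f : ℕ → M → ℝ := fun n z => dist z (u n) - dist x (u n) with hf
  have hfb : ∀ n z, |f n z| ≤ dist z x := fun n z => abs_dist_sub_le z x (u n)
  have hflip : ∀ n z w, |f n z - f n w| ≤ dist z w := by
    intro n z w
    have h := abs_dist_sub_le z w (u n)
    have : f n z - f n w = dist z (u n) - dist w (u n) := by simp only [hf]; ring
    rw [this]; exact h
  -- extract subsequence converging on the dense set
  set g : ℕ → ℕ → ℝ := fun n k => f n (D k) with hg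
  have hgmem : ∀ n, g n ∈ Set.pi Set.univ (fun k => Set.Icc (-(dist (D k) x)) (dist (D k) x)) := by
    intro n k _
    exact abs_le.1 (hfb n (D k))
  have hcomp : IsCompact (Set.pi Set.univ fun k => Set.Icc (-(dist (D k) x)) (dist (D k) x)) :=
    isCompact_univ_pi fun k => isCompact_Icc
  obtain ⟨L, -, σ, hσ, hσL⟩ := hcomp.tendsto_subseq hgmem
  have hcoord : ∀ k, Tendsto (fun n => f (σ n) (D k)) atTop (nhds (L k)) := by
    rw [tendsto_pi_nhds] at hσL
    exact hσL
  -- pointwise convergence everywhere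
  have hlim : ∀ z : M, ∃ l : ℝ, Tendsto (fun n => f (σ n) z) atTop (nhds l) := by
    intro z
    apply cauchySeq_tendsto_of_complete
    rw [Metric.cauchySeq_iff]
    intro ε hε
    obtain ⟨k, hk⟩ := hD.exists_dist_lt z (show (0:ℝ) < ε/4 by linarith)
    have hck := (hcoord k).cauchySeq
    rw [Metric.cauchySeq_iff] at hck
    obtain ⟨N, hN⟩ := hck (ε/2) (by linarith)
    refine ⟨N, fun m hm n hn => ?_⟩
    have ha := hflip (σ m) z (D k)
    have hb := hflip (σ n) (D k) z
    have hc := hN m hm n hn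
    rw [Real.dist_eq] at hc ⊢
    calc |f (σ m) z - f (σ n) z|
        ≤ |f (σ m) z - f (σ m) (D k)| + |f (σ m) (D k) - f (σ n) z| :=
          abs_sub_le _ _ _
      _ ≤ |f (σ m) z - f (σ m) (D k)| +
          (|f (σ m) (D k) - f (σ n) (D k)| + |f (σ n) (D k) - f (σ n) z|) := by
          gcongr; exact abs_sub_le _ _ _
      _ < ε/4 + (ε/2 + ε/4) := by
          gcongr
          · exact lt_of_le_of_lt ha hk
          · exact lt_of_le_of_lt hb (by rwa [dist_comm] at hk)
      _ = ε := by ring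
  -- subsequential limits are ≤ limsup
  have hle : ∀ z l, Tendsto (fun n => f (σ n) z) atTop (nhds l) →
      l ≤ limsup (fun n => f n z) atTop := by
    intro z l hl
    have hmap : map σ atTop ≤ atTop := hσ.tendsto_atTop
    have hne : (map σ atTop).NeBot := map_neBot
    have hbdd : IsBoundedUnder (· ≤ ·) atTop (fun n => f n z) :=
      Filter.isBoundedUnder_of ⟨dist z x, fun n => (abs_le.1 (hfb n z)).2⟩
    have hcob : IsCoboundedUnder (· ≤ ·) (map σ atTop) (fun n => f n z) :=
      IsBoundedUnder.isCoboundedUnder_le <|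
        Filter.isBoundedUnder_of ⟨-(dist z x), fun n => (abs_le.1 (hfb n z)).1⟩
    have hl' : Tendsto (fun n => f n z) (map σ atTop) (nhds l) := by
      rwa [tendsto_map'_iff]
    have heq : limsup (fun n => f n z) (map σ atTop) = l := hl'.limsup_eq
    rw [← heq]
    exact limsup_le_limsup_of_le hmap hcob hbdd
  have hten : Tendsto (fun n => dist x ((u ∘ σ) n)) atTop atTop :=
    h1.comp hσ.tendsto_atTop
  refine ⟨σ, hσ, ⟨hten, fun z => ?_⟩, ⟨hten, fun R hR => ?_⟩, fun R hR w hw => ?_⟩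
  · obtain ⟨l, hl⟩ := hlim z
    exact ⟨l, hl⟩
  · obtain ⟨w, hw⟩ := h2 R hR
    obtain ⟨l, hl⟩ := hlim w
    refine ⟨w, ?_⟩
    show limsup (fun n => dist w ((u ∘ σ) n) - dist x ((u ∘ σ) n)) atTop < _
    have : limsup (fun n => f (σ n) w) atTop = l := hl.limsup_eq
    calc limsup (fun n => f (σ n) w) atTop = l := this
      _ ≤ limsup (fun n => f n w) atTop := hle w l hl
      _ < (1/2) * Real.log R := hw
  · obtain ⟨l, hl⟩ := hlim w
    show limsup (fun n => dist w ((u ∘ σ) n) - dist x ((u ∘ σ) n)) atTop < _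
    calc limsup (fun n => f (σ n) w) atTop = l := hl.limsup_eq
      _ ≤ limsup (fun n => f n w) atTop := hle w l hl
      _ < (1/2) * Real.log R := hw
end
end
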